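/- Let S be a finite nonempty set, f : S → {-1,1}, and let {S_u}_{u∈N} be a partition of S indexed by a finite set N such that every block S_u contains at least one point with f = 1 and at least one point with f = -1. For u ∈ N let p_u = |S_u|/|S| and q_u = |{x ∈ S_u : f(x)=1}|/|S_u|, set H = Σ_{u∈N} p_u G(q_u), define the per-node balanced distribution d^u on S by d^u_x = 1/(2·|{x' ∈ S_u : f(x') = f(x)}|) if x ∈ S_u and 0 otherwise, set p'_u = p_u G(q_u)/H and d̂ = Σ_{u∈N} p'_u d^u. Let h : S → {-1,1} and γ ∈ (0,1) satisfy Σ_{x∈S} d̂_x f(x) h(x) ≥ γ. Refine the partition into the blocks S_u^± = {x ∈ S_u : h(x) = ±1}, with p_{u^±} = |S_u^±|/|S| and q_{u^±} = |{x ∈ S_u^± : f(x)=1}|/|S_u^±|. Then, partitioning the nonempty refined blocks into groups by assigning each to an interval of a (δ,η)-net containing its q-value, where δ = λ̂H/6, η = λ̂/3, and λ̂ = 1 − (Σ_{u,±} p_{u^±}G(q_{u^±}))/H, the merged blocks (unions of the groups) form a partition of S whose pseudo-entropy sum Σ_{J} P_J·G(Q_J) (with P_J the total p-mass of group J and Q_J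 its p-weighted average q-value) is at most (1 − γ²/4)·H. -/

import Mathlib

/-- The pseudo-entropy function `G(q) = 2√(q(1-q))`. -/
noncomputable def G (q : ℝ) : ℝ := 2 * Real.sqrt (q * (1 - q))

/-- The `±1` sign attached to a Boolean: `sgn true = 1`, `sgn false = -1`. -/
def sgn (s : Bool) : ℝ := if s then 1 else -1

/-!
For a block with `a` points where `f = 1` and `b` where `f = -1`, `|B|·G(q_B) = 2√(ab)`.
If `h` cuts it into parts with counts `a₁, b₁` and `a₂, b₂`, then
`√(a₁b₁) + √(a₂b₂) ≤ √(ab)·(1 - e²/2)`, where `e = a₁/a - b₁/b` is the correlation of `f`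
and `h` under the balanced distribution `d^B` (a Hellinger-type bound). The weighted edge
`γ ≤ Σ p'_u e_u` gives `Σ p'_u e_u² ≥ γ²` by Cauchy–Schwarz, so refining by `h` lowers the
pseudo-entropy to at most `(1 - γ²/2)H`, that is `λ̂ ≥ γ²/2`. Merging the refined blocks whose
`q`-values lie in a common interval of the net costs at most `δ + η(1 - λ̂)H`, and
`λ̂H/6 + (1 + λ̂/3)(1 - λ̂)H ≤ (1 - λ̂/2)H ≤ (1 - γ²/4)H`.
-/

open Finset

lemma G_nonneg (x : ℝ) : 0 ≤ G x := by unfold G; positivity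

lemma add_mul_G_div_add {a b : ℝ} (ha : 0 ≤ a) (hb : 0 ≤ b) :
    (a + b) * G (a / (a + b)) = 2 * √(a * b) := by
  rcases (add_nonneg ha hb).eq_or_lt with hab | hab
  · obtain ⟨rfl, rfl⟩ : a = 0 ∧ b = 0 := ⟨by linarith, by linarith⟩
    simp [G]
  · have hsq : a / (a + b) * (1 - a / (a + b)) = a * b / (a + b) ^ 2 := by
      field_simp; ring
    rw [G, hsq, Real.sqrt_div' _ (sq_nonneg _), Real.sqrt_sq hab.le]
    field_simp

lemma sqrt_mul_add_sqrt_one_sub_mul_one_sub_le {a b : ℝ} (ha₀ : 0 ≤ a) (ha₁ : a ≤ 1)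
    (hb₀ : 0 ≤ b) (hb₁ : b ≤ 1) :
    √(a * b) + √((1 - a) * (1 - b)) ≤ 1 - (a - b) ^ 2 / 2 := by
  have ha' : 0 ≤ 1 - a := by linarith
  have hb' : 0 ≤ 1 - b := by linarith
  set x := √(a * b)
  set y := √((1 - a) * (1 - b))
  set s := √(a * (1 - b))
  set t := √(b * (1 - a))
  have hx : x ^ 2 = a * b := Real.sq_sqrt (mul_nonneg ha₀ hb₀)
  have hy : y ^ 2 = (1 - a) * (1 - b) := Real.sq_sqrt (mul_nonneg ha' hb')
  have hs : s ^ 2 = a * (1 - b) := Real.sq_sqrt (mul_nonneg ha₀ hb')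
  have ht : t ^ 2 = b * (1 - a) := Real.sq_sqrt (mul_nonneg hb₀ ha')
  have hxy : x * y = s * t := by
    simp only [x, y, s, t, ← Real.sqrt_mul (mul_nonneg ha₀ hb₀),
      ← Real.sqrt_mul (mul_nonneg ha₀ hb')]
    ring_nf
  -- `x² + y² + s² + t² = 1`, so `(x + y)² = 1 - (s - t)²`, while `a - b = (s - t)(s + t)`
  -- with `(s + t)² ≤ 1`.
  have hst : (s + t) ^ 2 ≤ 1 := by nlinarith [sq_nonneg (x - y)]
  have hab : (a - b) ^ 2 = (s - t) ^ 2 * (s + t) ^ 2 := by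
    rw [← mul_pow]; congr 1; linear_combination ht - hs
  have hsum : (x + y) ^ 2 + (a - b) ^ 2 ≤ 1 := by
    nlinarith [mul_le_mul_of_nonneg_left hst (sq_nonneg (s - t))]
  have hxy₀ : 0 ≤ x + y := by positivity
  nlinarith [sq_nonneg (a - b), sq_nonneg ((a - b) ^ 2)]

lemma sqrt_mul_add_sqrt_mul_le {a₁ a₂ b₁ b₂ : ℝ} (ha₁ : 0 ≤ a₁) (ha₂ : 0 ≤ a₂) (hb₁ : 0 ≤ b₁)
    (hb₂ : 0 ≤ b₂) (ha : 0 < a₁ + a₂) (hb : 0 < b₁ + b₂) :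
    √(a₁ * b₁) + √(a₂ * b₂) ≤
      √((a₁ + a₂) * (b₁ + b₂)) * (1 - (a₁ / (a₁ + a₂) - b₁ / (b₁ + b₂)) ^ 2 / 2) := by
  set α := a₁ / (a₁ + a₂)
  set β := b₁ / (b₁ + b₂)
  have hα₀ : 0 ≤ α := div_nonneg ha₁ ha.le
  have hβ₀ : 0 ≤ β := div_nonneg hb₁ hb.le
  have hα₁ : α ≤ 1 := (div_le_one ha).2 (by linarith)
  have hβ₁ : β ≤ 1 := (div_le_one hb).2 (by linarith)
  have h₁ : a₁ * b₁ = α * β * ((a₁ + a₂) * (b₁ + b₂)) := by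
    simp only [α, β]; field_simp
  have h₂ : a₂ * b₂ = (1 - α) * (1 - β) * ((a₁ + a₂) * (b₁ + b₂)) := by
    simp only [α, β]; field_simp; ring
  rw [h₁, h₂, Real.sqrt_mul (mul_nonneg hα₀ hβ₀),
    Real.sqrt_mul (mul_nonneg (sub_nonneg.2 hα₁) (sub_nonneg.2 hβ₁)), ← add_mul, mul_comm]
  exact mul_le_mul_of_nonneg_left
    (sqrt_mul_add_sqrt_one_sub_mul_one_sub_le hα₀ hα₁ hβ₀ hβ₁) (Real.sqrt_nonneg _)

section SignCounts

variable {S : Type*} {s : Finset S} {g : S → ℝ}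

lemma filter_not_eq_one_eq_filter_eq_neg_one (hg : ∀ x ∈ s, g x = 1 ∨ g x = -1) :
    s.filter (fun x => ¬ g x = 1) = s.filter (g · = -1) := by
  refine filter_congr fun x hx => ?_
  rcases hg x hx with h | h <;> norm_num [h]

lemma card_filter_eq_one_add_card_filter_eq_neg_one (hg : ∀ x ∈ s, g x = 1 ∨ g x = -1) :
    #(s.filter (g · = 1)) + #(s.filter (g · = -1)) = #s := by
  rw [← filter_not_eq_one_eq_filter_eq_neg_one hg, card_filter_add_card_filter_not]

lemma sum_eq_card_filter_eq_one_sub_card_filter_eq_neg_one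
    (hg : ∀ x ∈ s, g x = 1 ∨ g x = -1) :
    ∑ x ∈ s, g x = #(s.filter (g · = 1)) - #(s.filter (g · = -1)) := by
  rw [← sum_filter_add_sum_filter_not s (g · = 1), filter_not_eq_one_eq_filter_eq_neg_one hg,
    sum_congr rfl fun x hx => (mem_filter.1 hx).2,
    sum_congr rfl fun x hx => (mem_filter.1 hx).2]
  simp [sub_eq_add_neg]

end SignCounts

section Block

variable {S : Type*} {B : Finset S} {f h : S → ℝ}

/-- The paper's `p_B G(q_B)` multiplied by `|S|`. -/
noncomputable def pseudoEntropyMass (B : Finset S) (f : S → ℝ) : ℝ :=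
  #B * G (#(B.filter (f · = 1)) / #B)

/-- `Σ_x d^B_x f(x) h(x)` for the paper's balanced distribution `d^B` on the block `B`. -/
noncomputable def balancedCorrelation (B : Finset S) (f h : S → ℝ) : ℝ :=
  ∑ x ∈ B, f x * h x / (2 * #(B.filter (f · = f x)))

lemma pseudoEntropyMass_eq (hf : ∀ x ∈ B, f x = 1 ∨ f x = -1) :
    pseudoEntropyMass B f = 2 * √(#(B.filter (f · = 1)) * #(B.filter (f · = -1))) := by
  rw [pseudoEntropyMass, ← card_filter_eq_one_add_card_filter_eq_neg_one hf, Nat.cast_add,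
    add_mul_G_div_add (Nat.cast_nonneg _) (Nat.cast_nonneg _)]

lemma pseudoEntropyMass_pos (hf : ∀ x ∈ B, f x = 1 ∨ f x = -1)
    (hpos : (B.filter (f · = 1)).Nonempty) (hneg : (B.filter (f · = -1)).Nonempty) :
    0 < pseudoEntropyMass B f := by
  rw [pseudoEntropyMass_eq hf]
  have := hpos.card_pos
  have := hneg.card_pos
  positivity

lemma balancedCorrelation_eq (hf : ∀ x ∈ B, f x = 1 ∨ f x = -1)
    (hh : ∀ x ∈ B, h x = 1 ∨ h x = -1)
    (hpos : (B.filter (f · = 1)).Nonempty) (hneg : (B.filter (f · = -1)).Nonempty) :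
    balancedCorrelation B f h =
      #((B.filter (f · = 1)).filter (h · = 1)) / #(B.filter (f · = 1)) -
        #((B.filter (f · = -1)).filter (h · = 1)) / #(B.filter (f · = -1)) := by
  set P := B.filter (f · = 1)
  set M := B.filter (f · = -1)
  have hsumP :
      ∑ x ∈ P, f x * h x / (2 * #(B.filter (f · = f x))) = (∑ x ∈ P, h x) / (2 * #P) := by
    rw [sum_div]
    refine sum_congr rfl fun x hx => ?_
    rw [(mem_filter.1 hx).2, one_mul]
  have hsumM : ∑ x ∈ M, f x * h x / (2 * #(B.filter (f · = f x))) =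
      -(∑ x ∈ M, h x) / (2 * #M) := by
    rw [neg_div, sum_div, ← sum_neg_distrib]
    refine sum_congr rfl fun x hx => ?_
    rw [(mem_filter.1 hx).2, neg_one_mul, neg_div]
  have hPh : (#P : ℝ) = #(P.filter (h · = 1)) + #(P.filter (h · = -1)) := by
    exact_mod_cast (card_filter_eq_one_add_card_filter_eq_neg_one
      fun x (hx : x ∈ P) => hh x (mem_filter.1 hx).1).symm
  have hMh : (#M : ℝ) = #(M.filter (h · = 1)) + #(M.filter (h · = -1)) := by
    exact_mod_cast (card_filter_eq_one_add_card_filter_eq_neg_one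
      fun x (hx : x ∈ M) => hh x (mem_filter.1 hx).1).symm
  have hP₀ : (0 : ℝ) < #P := by exact_mod_cast hpos.card_pos
  have hM₀ : (0 : ℝ) < #M := by exact_mod_cast hneg.card_pos
  rw [balancedCorrelation, ← sum_filter_add_sum_filter_not B (f · = 1),
    filter_not_eq_one_eq_filter_eq_neg_one hf, hsumP, hsumM,
    sum_eq_card_filter_eq_one_sub_card_filter_eq_neg_one fun x hx => hh x (mem_filter.1 hx).1,
    sum_eq_card_filter_eq_one_sub_card_filter_eq_neg_one fun x hx => hh x (mem_filter.1 hx).1]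
  rw [hPh] at hP₀ ⊢
  rw [hMh] at hM₀ ⊢
  field_simp
  ring

theorem pseudoEntropyMass_filter_add_le (hf : ∀ x ∈ B, f x = 1 ∨ f x = -1)
    (hh : ∀ x ∈ B, h x = 1 ∨ h x = -1)
    (hpos : (B.filter (f · = 1)).Nonempty) (hneg : (B.filter (f · = -1)).Nonempty) :
    pseudoEntropyMass (B.filter (h · = 1)) f + pseudoEntropyMass (B.filter (h · = -1)) f ≤
      pseudoEntropyMass B f * (1 - balancedCorrelation B f h ^ 2 / 2) := by
  have hfh : ∀ c : ℝ, ∀ x ∈ B.filter (h · = c), f x = 1 ∨ f x = -1 :=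
    fun c x hx => hf x (mem_filter.1 hx).1
  rw [pseudoEntropyMass_eq hf, pseudoEntropyMass_eq (hfh 1), pseudoEntropyMass_eq (hfh (-1)),
    balancedCorrelation_eq hf hh hpos hneg, filter_comm (fun x => h x = 1),
    filter_comm (fun x => h x = 1), filter_comm (fun x => h x = -1),
    filter_comm (fun x => h x = -1)]
  set P := B.filter (f · = 1)
  set M := B.filter (f · = -1)
  have hPh : (#P : ℝ) = #(P.filter (h · = 1)) + #(P.filter (h · = -1)) := by
    exact_mod_cast (card_filter_eq_one_add_card_filter_eq_neg_one
      fun x (hx : x ∈ P) => hh x (mem_filter.1 hx).1).symm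
  have hMh : (#M : ℝ) = #(M.filter (h · = 1)) + #(M.filter (h · = -1)) := by
    exact_mod_cast (card_filter_eq_one_add_card_filter_eq_neg_one
      fun x (hx : x ∈ M) => hh x (mem_filter.1 hx).1).symm
  have hP₀ : (0 : ℝ) < #P := by exact_mod_cast hpos.card_pos
  have hM₀ : (0 : ℝ) < #M := by exact_mod_cast hneg.card_pos
  rw [hPh] at hP₀ ⊢
  rw [hMh] at hM₀ ⊢
  have := sqrt_mul_add_sqrt_mul_le (Nat.cast_nonneg _) (Nat.cast_nonneg _) (Nat.cast_nonneg _)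
    (Nat.cast_nonneg _) hP₀ hM₀
  linarith

end Block

lemma sum_le_one_sub_sq_div_two_mul_sum {ι : Type*} (s : Finset ι) {m r e : ι → ℝ} {γ : ℝ}
    (hm : ∀ i ∈ s, 0 ≤ m i) (hr : ∀ i ∈ s, r i ≤ m i * (1 - e i ^ 2 / 2)) (hγ : 0 ≤ γ)
    (hcorr : γ * ∑ i ∈ s, m i ≤ ∑ i ∈ s, m i * e i) :
    ∑ i ∈ s, r i ≤ (1 - γ ^ 2 / 2) * ∑ i ∈ s, m i := by
  set M := ∑ i ∈ s, m i
  have hM : 0 ≤ M := sum_nonneg hm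
  have hsq : 0 ≤ ∑ i ∈ s, m i * e i ^ 2 :=
    sum_nonneg fun i hi => mul_nonneg (hm i hi) (sq_nonneg _)
  have hCS : (∑ i ∈ s, m i * e i) ^ 2 ≤ M * ∑ i ∈ s, m i * e i ^ 2 :=
    sum_sq_le_sum_mul_sum_of_sq_le_mul s hm (fun i hi => mul_nonneg (hm i hi) (sq_nonneg _))
      fun i _ => (by ring : (m i * e i) ^ 2 = m i * (m i * e i ^ 2)).le
  have hγM : γ ^ 2 * M ≤ ∑ i ∈ s, m i * e i ^ 2 := by
    rcases hM.eq_or_lt with h0 | hpos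
    · rw [← h0, mul_zero]; exact hsq
    · refine le_of_mul_le_mul_left ?_ hpos
      nlinarith [mul_nonneg hγ hM]
  calc ∑ i ∈ s, r i ≤ ∑ i ∈ s, m i * (1 - e i ^ 2 / 2) := sum_le_sum hr
    _ = M - (∑ i ∈ s, m i * e i ^ 2) / 2 := by
      rw [sum_div, ← sum_sub_distrib]; exact sum_congr rfl fun i _ => by ring
    _ ≤ (1 - γ ^ 2 / 2) * M := by linarith

lemma sum_mul_div_sum_mem_Icc {ι : Type*} (t : Finset ι) {m y : ι → ℝ} {a b : ℝ}
    (hm : ∀ i ∈ t, 0 ≤ m i) (hy : ∀ i ∈ t, 0 < m i → y i ∈ Set.Icc a b)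
    (ht : 0 < ∑ i ∈ t, m i) :
    (∑ i ∈ t, m i * y i) / ∑ i ∈ t, m i ∈ Set.Icc a b := by
  have key : ∀ i ∈ t, m i * a ≤ m i * y i ∧ m i * y i ≤ m i * b := by
    intro i hi
    rcases (hm i hi).eq_or_lt with h0 | hpos
    · simp [← h0]
    · exact ⟨by gcongr; exact (hy i hi hpos).1, by gcongr; exact (hy i hi hpos).2⟩
  rw [Set.mem_Icc, le_div_iff₀ ht, div_le_iff₀ ht, mul_comm a, mul_comm b, sum_mul, sum_mul]
  exact ⟨sum_le_sum fun i hi => (key i hi).1, sum_le_sum fun i hi => (key i hi).2⟩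

theorem sum_merge_mul_le {ι : Type*} [Fintype ι] {φ : ℝ → ℝ} (hφ : ∀ t, 0 ≤ φ t)
    {m y : ι → ℝ} (hm : ∀ i, 0 ≤ m i) {w : ℕ} {v : ℕ → ℝ} {δ η : ℝ} (hδ : 0 ≤ δ) (hη : 0 ≤ η)
    (hnet : ∀ k < w, ∀ a ∈ Set.Icc (v k) (v (k + 1)), ∀ b ∈ Set.Icc (v k) (v (k + 1)),
      φ b ≤ max δ ((1 + η) * φ a))
    {κ : ι → ℕ} (hκ : ∀ i, 0 < m i → y i ∈ Set.Icc (v (κ i)) (v (κ i + 1)))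
    {P Q : ℕ → ℝ} (hP : ∀ k, P k = ∑ i ∈ univ.filter (κ · = k), m i)
    (hQ : ∀ k, Q k = (∑ i ∈ univ.filter (κ · = k), m i * y i) / P k) :
    ∑ k ∈ (range w).filter (0 < P ·), P k * φ (Q k) ≤
      δ * ∑ i, m i + (1 + η) * ∑ i, m i * φ (y i) := by
  set F : ι → ℝ := fun i => m i * (δ + (1 + η) * φ (y i))
  have hF : ∀ i, 0 ≤ F i := fun i => mul_nonneg (hm i) (by have := hφ (y i); positivity)
  have hgroup : ∀ k ∈ (range w).filter (0 < P ·),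
      P k * φ (Q k) ≤ ∑ i ∈ univ.filter (κ · = k), F i := by
    intro k hk
    obtain ⟨hkw, hPk⟩ := mem_filter.1 hk
    have hgroup_mem :
        ∀ i ∈ univ.filter (κ · = k), 0 < m i → y i ∈ Set.Icc (v k) (v (k + 1)) :=
      fun i hi hmi => (mem_filter.1 hi).2 ▸ hκ i hmi
    have hQk : Q k ∈ Set.Icc (v k) (v (k + 1)) := by
      rw [hQ, hP]
      rw [hP] at hPk
      exact sum_mul_div_sum_mem_Icc _ (fun i _ => hm i) hgroup_mem hPk
    rw [hP, sum_mul]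
    refine sum_le_sum fun i hi => ?_
    rcases (hm i).eq_or_lt with h0 | hmi
    · simp [F, ← h0]
    · refine mul_le_mul_of_nonneg_left ?_ (hm i)
      exact (hnet k (mem_range.1 hkw) _ (hgroup_mem i hi hmi) _ hQk).trans
        (max_le_add_of_nonneg hδ (mul_nonneg (by linarith) (hφ _)))
  calc ∑ k ∈ (range w).filter (0 < P ·), P k * φ (Q k)
      ≤ ∑ k ∈ (range w).filter (0 < P ·), ∑ i ∈ univ.filter (κ · = k), F i :=
        sum_le_sum hgroup
    _ ≤ ∑ i, F i :=
        sum_fiberwise_le_sum_of_sum_fiber_nonneg fun k _ => sum_nonneg fun i _ => hF i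
    _ = δ * ∑ i, m i + (1 + η) * ∑ i, m i * φ (y i) := by
      simp only [F, mul_sum, ← sum_add_distrib]
      exact sum_congr rfl fun i _ => by ring

section Partition

variable {S N : Type*} [Fintype S] [DecidableEq N] {f h : S → ℝ} {ℓ : S → N}

lemma filter_fiber_nonempty {g : S → ℝ} {u : N} {c : ℝ} (hx : ∃ x, ℓ x = u ∧ g x = c) :
    ((univ.filter (ℓ · = u)).filter (g · = c)).Nonempty :=
  let ⟨x, hx⟩ := hx; ⟨x, by simp [hx]⟩

variable [Fintype N]

lemma sum_card_filter_sgn_div_card [Nonempty S] (hh : ∀ x, h x = 1 ∨ h x = -1) :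
    ∑ v : N × Bool, (#(univ.filter fun x => ℓ x = v.1 ∧ h x = sgn v.2) : ℝ) / Fintype.card S =
      1 := by
  have hcard : ∑ v : N × Bool, #(univ.filter fun x => ℓ x = v.1 ∧ h x = sgn v.2) =
      Fintype.card S := by
    simp only [Fintype.sum_prod_type, Fintype.sum_bool, sgn, if_true, Bool.false_eq_true,
      if_false, ← filter_filter, card_filter_eq_one_add_card_filter_eq_neg_one fun x _ => hh x]
    exact (card_eq_sum_card_fiberwise fun x _ => mem_univ (ℓ x)).symm
  rw [← sum_div, div_eq_one_iff_eq (Nat.cast_ne_zero.2 Fintype.card_ne_zero)]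
  exact_mod_cast hcard

lemma sum_mixture_mul_eq {m : N → ℝ} {d : N → S → ℝ}
    (hd : ∀ u x, d u x = if ℓ x = u then
      1 / (2 * ((univ.filter fun x' => ℓ x' = u ∧ f x' = f x).card : ℝ)) else 0)
    {p' : N → ℝ} (hp' : ∀ u, p' u = m u / ∑ u', m u') {dhat : S → ℝ}
    (hdhat : ∀ x, dhat x = ∑ u, p' u * d u x) :
    ∑ x, dhat x * f x * h x =
      (∑ u, m u * balancedCorrelation (univ.filter (ℓ · = u)) f h) / ∑ u, m u := by
  have hd_corr : ∀ u,
      ∑ x, d u x * f x * h x = balancedCorrelation (univ.filter (ℓ · = u)) f h := by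
    intro u
    rw [balancedCorrelation, sum_filter]
    refine sum_congr rfl fun x _ => ?_
    rw [hd, filter_filter]
    split_ifs <;> ring
  simp only [hdhat, sum_mul]
  rw [sum_comm, sum_div]
  refine sum_congr rfl fun u _ => ?_
  rw [← hd_corr, hp', mul_sum, sum_div]
  exact sum_congr rfl fun x _ => by ring

theorem sum_pseudoEntropyMass_refine_le (hf : ∀ x, f x = 1 ∨ f x = -1)
    (hh : ∀ x, h x = 1 ∨ h x = -1)
    (hblocks : ∀ u : N, (∃ x, ℓ x = u ∧ f x = 1) ∧ (∃ x, ℓ x = u ∧ f x = -1)) {γ : ℝ}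
    (hγ : 0 ≤ γ)
    (hcorr : γ * ∑ u, pseudoEntropyMass (univ.filter (ℓ · = u)) f ≤
      ∑ u, pseudoEntropyMass (univ.filter (ℓ · = u)) f *
        balancedCorrelation (univ.filter (ℓ · = u)) f h) :
    ∑ v : N × Bool, pseudoEntropyMass (univ.filter fun x => ℓ x = v.1 ∧ h x = sgn v.2) f ≤
      (1 - γ ^ 2 / 2) * ∑ u, pseudoEntropyMass (univ.filter (ℓ · = u)) f := by
  have hpos := fun u => filter_fiber_nonempty (hblocks u).1
  have hneg := fun u => filter_fiber_nonempty (hblocks u).2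
  rw [Fintype.sum_prod_type]
  refine sum_le_one_sub_sq_div_two_mul_sum _
    (fun u _ => (pseudoEntropyMass_pos (fun x _ => hf x) (hpos u) (hneg u)).le) (fun u _ => ?_)
    hγ hcorr
  simpa only [Fintype.sum_bool, sgn, if_true, Bool.false_eq_true, if_false, filter_filter] using
    pseudoEntropyMass_filter_add_le (fun x _ => hf x) (fun x _ => hh x) (hpos u) (hneg u)

theorem pos_and_sum_split_mul_G_le [Nonempty S] (hf : ∀ x, f x = 1 ∨ f x = -1)
    (hh : ∀ x, h x = 1 ∨ h x = -1)
    (hblocks : ∀ u : N, (∃ x, ℓ x = u ∧ f x = 1) ∧ (∃ x, ℓ x = u ∧ f x = -1))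
    {p q : N → ℝ}
    (hp : ∀ u, p u = ((univ.filter fun x => ℓ x = u).card : ℝ) / (Fintype.card S : ℝ))
    (hq : ∀ u, q u = ((univ.filter fun x => ℓ x = u ∧ f x = 1).card : ℝ) /
      ((univ.filter fun x => ℓ x = u).card : ℝ))
    {H : ℝ} (hH : H = ∑ u, p u * G (q u)) {d : N → S → ℝ}
    (hd : ∀ u x, d u x = if ℓ x = u then
      1 / (2 * ((univ.filter fun x' => ℓ x' = u ∧ f x' = f x).card : ℝ)) else 0)
    {p' : N → ℝ} (hp' : ∀ u, p' u = p u * G (q u) / H)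
    {dhat : S → ℝ} (hdhat : ∀ x, dhat x = ∑ u, p' u * d u x)
    {γ : ℝ} (hγ : 0 ≤ γ) (hedge : γ ≤ ∑ x, dhat x * f x * h x) {pp qq : N × Bool → ℝ}
    (hpp : ∀ v : N × Bool, pp v =
      ((univ.filter fun x => ℓ x = v.1 ∧ h x = sgn v.2).card : ℝ) / (Fintype.card S : ℝ))
    (hqq : ∀ v : N × Bool, qq v =
      ((univ.filter fun x => ℓ x = v.1 ∧ h x = sgn v.2 ∧ f x = 1).card : ℝ) /
      ((univ.filter fun x => ℓ x = v.1 ∧ h x = sgn v.2).card : ℝ)) :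
    0 < H ∧ ∑ v, pp v * G (qq v) ≤ (1 - γ ^ 2 / 2) * H := by
  have hn : (0 : ℝ) < Fintype.card S := by exact_mod_cast Fintype.card_pos
  set mass : N → ℝ := fun u => pseudoEntropyMass (univ.filter (ℓ · = u)) f
  have hM : 0 < ∑ u, mass u :=
    sum_pos (fun u _ => pseudoEntropyMass_pos (fun x _ => hf x)
      (filter_fiber_nonempty (hblocks u).1) (filter_fiber_nonempty (hblocks u).2))
      ⟨ℓ (Classical.arbitrary S), mem_univ _⟩
  have hmass : ∀ u, p u * G (q u) = mass u / Fintype.card S := fun u => by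
    simp only [hp, hq, mass, pseudoEntropyMass, filter_filter]
    ring
  have hmass' : ∀ v, pp v * G (qq v) =
      pseudoEntropyMass (univ.filter fun x => ℓ x = v.1 ∧ h x = sgn v.2) f / Fintype.card S :=
    fun v => by
      simp only [hpp, hqq, pseudoEntropyMass, filter_filter, and_assoc]
      ring
  have hHM : H = (∑ u, mass u) / Fintype.card S := by simp only [hH, hmass, sum_div]
  have hcorr := hedge.trans_eq
    (sum_mixture_mul_eq hd (fun u => by rw [hp', hmass, hHM]; field_simp) hdhat)
  rw [le_div_iff₀ hM] at hcorr
  refine ⟨by rw [hHM]; positivity, ?_⟩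
  simp only [hmass', ← sum_div, hHM, mul_div_assoc']
  exact div_le_div_of_nonneg_right
    (sum_pseudoEntropyMass_refine_le hf hh hblocks hγ hcorr) hn.le

end Partition

theorem stmt15_general {S N : Type*} [Fintype S] [Nonempty S] [Fintype N] [DecidableEq N]
    (f h : S → ℝ) (hf : ∀ x, f x = 1 ∨ f x = -1) (hh : ∀ x, h x = 1 ∨ h x = -1)
    (ℓ : S → N)
    (hblocks : ∀ u : N, (∃ x, ℓ x = u ∧ f x = 1) ∧ (∃ x, ℓ x = u ∧ f x = -1))
    (p q : N → ℝ)
    (hp : ∀ u, p u = ((Finset.univ.filter fun x => ℓ x = u).card : ℝ) / (Fintype.card S : ℝ))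
    (hq : ∀ u, q u = ((Finset.univ.filter fun x => ℓ x = u ∧ f x = 1).card : ℝ) /
      ((Finset.univ.filter fun x => ℓ x = u).card : ℝ))
    (H : ℝ) (hH : H = ∑ u, p u * G (q u))
    (d : N → S → ℝ)
    (hd : ∀ u x, d u x = if ℓ x = u then
      1 / (2 * ((Finset.univ.filter fun x' => ℓ x' = u ∧ f x' = f x).card : ℝ)) else 0)
    (p' : N → ℝ) (hp' : ∀ u, p' u = p u * G (q u) / H)
    (dhat : S → ℝ) (hdhat : ∀ x, dhat x = ∑ u, p' u * d u x)
    (γ : ℝ) (hγ : γ ∈ Set.Ioo (0 : ℝ) 1)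
    (hedge : γ ≤ ∑ x, dhat x * f x * h x)
    (pp qq : N × Bool → ℝ)
    (hpp : ∀ v : N × Bool, pp v =
      ((Finset.univ.filter fun x => ℓ x = v.1 ∧ h x = sgn v.2).card : ℝ) / (Fintype.card S : ℝ))
    (hqq : ∀ v : N × Bool, qq v =
      ((Finset.univ.filter fun x => ℓ x = v.1 ∧ h x = sgn v.2 ∧ f x = 1).card : ℝ) /
      ((Finset.univ.filter fun x => ℓ x = v.1 ∧ h x = sgn v.2).card : ℝ))
    (lamhat δ η : ℝ)
    (hlamhat : lamhat = 1 - (∑ v, pp v * G (qq v)) / H)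
    (hδ : δ = lamhat * H / 6) (hη : η = lamhat / 3)
    (w : ℕ) (v : ℕ → ℝ)
    (hnet : ∀ k < w, ∀ a ∈ Set.Icc (v k) (v (k + 1)), ∀ b ∈ Set.Icc (v k) (v (k + 1)),
      G b ≤ max δ ((1 + η) * G a))
    (κ : N × Bool → ℕ)
    (hκ : ∀ u : N × Bool, 0 < pp u → κ u < w ∧ qq u ∈ Set.Icc (v (κ u)) (v (κ u + 1)))
    (PJ QJ : ℕ → ℝ)
    (hPJ : ∀ k, PJ k = ∑ u ∈ Finset.univ.filter (fun u : N × Bool => κ u = k), pp u)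
    (hQJ : ∀ k, QJ k =
      (∑ u ∈ Finset.univ.filter (fun u : N × Bool => κ u = k), pp u * qq u) / PJ k) :
    ∑ k ∈ (Finset.range w).filter (fun k => 0 < PJ k), PJ k * G (QJ k) ≤
      (1 - γ^2/4) * H := by
  obtain ⟨hH₀, hsplit⟩ :=
    pos_and_sum_split_mul_G_le hf hh hblocks hp hq hH hd hp' hdhat hγ.1.le hedge hpp hqq
  have hlam : γ ^ 2 / 2 ≤ lamhat := by
    rw [hlamhat]
    linarith [(div_le_iff₀ hH₀).2 hsplit]
  have hlam₀ : 0 ≤ lamhat := le_trans (by positivity) hlam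
  have hsum_mass : ∑ v, pp v = 1 := by
    simp only [hpp]
    exact sum_card_filter_sgn_div_card hh
  have hsum_G : ∑ v, pp v * G (qq v) = (1 - lamhat) * H := by
    rw [hlamhat]
    field_simp
    ring
  have hpp₀ : ∀ v, 0 ≤ pp v := fun v => by
    rw [hpp v]; exact div_nonneg (Nat.cast_nonneg _) (Nat.cast_nonneg _)
  have hmerge :=
    sum_merge_mul_le G_nonneg hpp₀ (by rw [hδ]; positivity) (by rw [hη]; positivity) hnet
      (fun v hv => (hκ v hv).2) hPJ hQJ
  rw [hsum_mass, hsum_G, hδ, hη] at hmerge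
  -- `λ̂H/6 + (1 + λ̂/3)(1 - λ̂)H = (1 - λ̂/2 - λ̂²/3)H` and `λ̂ ≥ γ²/2`
  nlinarith [mul_nonneg hH₀.le (sub_nonneg.2 hlam), mul_nonneg hH₀.le (sq_nonneg lamhat)]

/-- split-and-merge step: let `S` be finite nonempty, `f : S → {-1,1}`, and
`ℓ : S → N` a partition into blocks `S_u = ℓ⁻¹(u)` each containing both labels. With
`p_u = |S_u|/|S|`, `q_u = |{x ∈ S_u : f x = 1}|/|S_u|`, `H = Σ_u p_u G(q_u)`, the per-node
balanced distributions `d^u`, weights `p'_u = p_u G(q_u)/H` and mixture `d̂ = Σ_u p'_u d^u`,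
suppose `h : S → {-1,1}` satisfies `Σ_x d̂_x f(x) h(x) ≥ γ` with `γ ∈ (0,1)`. Refine the
partition into blocks `S_u^± = {x ∈ S_u : h x = ±1}` (indexed by `N × Bool`) with masses
`pp` and label frequencies `qq`, put `λ̂ = 1 − (Σ pp·G(qq))/H`, `δ = λ̂H/6`, `η = λ̂/3`,
take a `(δ,η)`-net `0 = v_0 ≤ … ≤ v_w = 1`, and assign (via `κ`) each refined block of positive
mass to an interval containing its `q`-value. Then the merged groups, with masses `PJ` and
weighted average values `QJ`, satisfy `Σ_{k : PJ_k > 0} PJ_k · G(QJ_k) ≤ (1 − γ²/4)·H`. -/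
theorem stmt15 {S N : Type*} [Fintype S] [Nonempty S] [Fintype N] [DecidableEq N]
    (f h : S → ℝ) (hf : ∀ x, f x = 1 ∨ f x = -1) (hh : ∀ x, h x = 1 ∨ h x = -1)
    (ℓ : S → N)
    (hblocks : ∀ u : N, (∃ x, ℓ x = u ∧ f x = 1) ∧ (∃ x, ℓ x = u ∧ f x = -1))
    (p q : N → ℝ)
    (hp : ∀ u, p u = ((Finset.univ.filter fun x => ℓ x = u).card : ℝ) / (Fintype.card S : ℝ))
    (hq : ∀ u, q u = ((Finset.univ.filter fun x => ℓ x = u ∧ f x = 1).card : ℝ) /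
      ((Finset.univ.filter fun x => ℓ x = u).card : ℝ))
    (H : ℝ) (hH : H = ∑ u, p u * G (q u))
    (d : N → S → ℝ)
    (hd : ∀ u x, d u x = if ℓ x = u then
      1 / (2 * ((Finset.univ.filter fun x' => ℓ x' = u ∧ f x' = f x).card : ℝ)) else 0)
    (p' : N → ℝ) (hp' : ∀ u, p' u = p u * G (q u) / H)
    (dhat : S → ℝ) (hdhat : ∀ x, dhat x = ∑ u, p' u * d u x)
    (γ : ℝ) (hγ : γ ∈ Set.Ioo (0 : ℝ) 1)
    (hedge : γ ≤ ∑ x, dhat x * f x * h x)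
    (pp qq : N × Bool → ℝ)
    (hpp : ∀ v : N × Bool, pp v =
      ((Finset.univ.filter fun x => ℓ x = v.1 ∧ h x = sgn v.2).card : ℝ) / (Fintype.card S : ℝ))
    (hqq : ∀ v : N × Bool, qq v =
      ((Finset.univ.filter fun x => ℓ x = v.1 ∧ h x = sgn v.2 ∧ f x = 1).card : ℝ) /
      ((Finset.univ.filter fun x => ℓ x = v.1 ∧ h x = sgn v.2).card : ℝ))
    (lamhat δ η : ℝ)
    (hlamhat : lamhat = 1 - (∑ v, pp v * G (qq v)) / H)
    (hδ : δ = lamhat * H / 6) (hη : η = lamhat / 3)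
    (w : ℕ) (v : ℕ → ℝ) (hv0 : v 0 = 0) (hvw : v w = 1)
    (hmono : ∀ k < w, v k ≤ v (k + 1))
    (hnet : ∀ k < w, ∀ a ∈ Set.Icc (v k) (v (k + 1)), ∀ b ∈ Set.Icc (v k) (v (k + 1)),
      G b ≤ max δ ((1 + η) * G a))
    (κ : N × Bool → ℕ)
    (hκ : ∀ u : N × Bool, 0 < pp u → κ u < w ∧ qq u ∈ Set.Icc (v (κ u)) (v (κ u + 1)))
    (PJ QJ : ℕ → ℝ)
    (hPJ : ∀ k, PJ k = ∑ u ∈ Finset.univ.filter (fun u : N × Bool => κ u = k), pp u)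
    (hQJ : ∀ k, QJ k =
      (∑ u ∈ Finset.univ.filter (fun u : N × Bool => κ u = k), pp u * qq u) / PJ k) :
    ∑ k ∈ (Finset.range w).filter (fun k => 0 < PJ k), PJ k * G (QJ k) ≤
      (1 - γ^2/4) * H :=
  stmt15_general f h hf hh ℓ hblocks p q hp hq H hH d hd p' hp' dhat hdhat γ hγ hedge pp qq hpp hqq
    lamhat δ η hlamhat hδ hη w v hnet κ hκ PJ QJ hPJ hQJ
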